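/- Let (Z, 𝒵) be a measurable space, let Q and P be probability measures on Z, let ω̃ : Z → [0,∞) be measurable with ∫ ω̃ dQ = 1, and let P̃ be the probability measure with density ω̃ with respect to Q. Define the balanced classification problem between P (label 1) and P̃ (label 0): let Π := (1/2)(P ⊗ δ_1) + (1/2)(P̃ ⊗ δ_0) on Z × {0,1}, and let R* := inf over measurable classifiers g : Z → {0,1} of Π({(z,k) : g(z) ≠ k}). On a common probability space, let Z^1, …, Z^n be i.i.d. with law Q and let Z^{n+1} have law P, with Z^1, …, Z^{n+1} mutually independent; let V : Z → ℝ be measurable and α ∈ (0,1); define the weights p_i := ω̃(Z^i) / (Σ_{j=1}^n ω̃(Z^j) + ω̃(Z^{n+1})) for i = 1, …, n+1 (with the convention that the weighted quantile below is +∞ when the denominator is 0). Then P( V(Z^{n+1}) ≤ Quantile_{1−α}( Σ_{i=1}^n p_i δ_{V(Z^i)} + p_{n+1} δ_{+∞} ) ) ≥ 1 − α − (1 − 2·R*). -/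

import Mathlib

open MeasureTheory ProbabilityTheory
open scoped ENNReal

universe u

/-- Measurable space structure on `Option α`, via the identification with `α ⊕ PUnit`. -/
instance optionMeasurableSpace {α : Type u} [MeasurableSpace α] : MeasurableSpace (Option α) :=
  MeasurableSpace.comap (Equiv.optionEquivSumPUnit.{0, u} α) inferInstance

/-- The `β`-quantile of the discrete distribution `∑ i, w i · δ_{v i}` on `ℝ ∪ {+∞}`:
`inf { z ∈ ℝ : ∑_{i : v i ≤ z} w i ≥ β }`, with `inf ∅ = +∞`. -/
noncomputable def wQuantile {ι : Type*} [Fintype ι] (β : ℝ) (w : ι → ℝ) (v : ι → EReal) : EReal :=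
  sInf {z : EReal | ∃ r : ℝ, z = (r : EReal) ∧
    β ≤ ∑ i ∈ Finset.univ.filter (fun i => v i ≤ (r : EReal)), w i}

/-- Total variation distance between two measures. -/
noncomputable def tvDist {Z : Type*} [MeasurableSpace Z] (P Q : Measure Z) : ℝ :=
  ⨆ A : {A : Set Z // MeasurableSet A}, |(P A.1).toReal - (Q A.1).toReal|

/-- The mask operator: coordinate `j` is `NA` (i.e. `none`) if `m j = true`, else `x j`. -/
def maskOp {d : ℕ} (x : Fin d → ℝ) (m : Fin d → Bool) : Fin d → Option ℝ :=
  fun j => if m j then none else some (x j)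

/-- The `β`-quantile of `(∑_{i=1}^n δ_{sc i} + δ_{+∞})/(n+1)`. -/
noncomputable def splitQuantile {n : ℕ} (β : ℝ) (sc : Fin n → ℝ) : EReal :=
  wQuantile β (fun _ : Option (Fin n) => 1 / (n + 1 : ℝ))
    (fun i => i.elim (⊤ : EReal) (fun j => ((sc j : ℝ) : EReal)))

/-!
Write `P̃ = ω̃ · Q`. If the test point had law `P̃` instead of `P`, the sample would have the
i.i.d. law `Q^{n+1}` reweighted by `ω̃(z_{n+1})`. Exchangeability of `Q^{n+1}` makes
`E[ω̃(Z_k); Z_k exceeds the weighted (1-α)-quantile]` independent of `k`, while pointwise the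
exceeding indices carry at most an `α`-fraction of the total weight, whose mean is `n + 1`;
so the miscoverage under `P̃` is at most `α`. Passing from `P̃` to `P` costs at most
`P S - P̃ S` for a Hahn set `S` of `P - P̃` (apply it to each slice in the test coordinate),
and the classifier `1_S` has balanced risk `(1 - (P S - P̃ S)) / 2`, so `P S - P̃ S ≤ 1 - 2 R*`.
-/

namespace MeasureTheory

variable {ι α : Type*} [Fintype ι] [MeasurableSpace α]

theorem lintegral_fintype_prod_eq_prod (μ : ι → Measure α) [∀ i, IsProbabilityMeasure (μ i)]
    (f : ι → α → ℝ≥0∞) (hf : ∀ i, Measurable (f i)) :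
    ∫⁻ x, ∏ i, f i (x i) ∂Measure.pi μ = ∏ i, ∫⁻ a, f i a ∂μ i := by
  rw [lintegral_prod_eq_prod_lintegral_of_indepFun _ _
    (iIndepFun_pi fun i => (hf i).aemeasurable) fun i => (hf i).comp (measurable_pi_apply i)]
  exact Finset.prod_congr rfl fun i _ => (measurePreserving_eval μ i).lintegral_comp (hf i)

theorem Measure.pi_withDensity (μ : ι → Measure α) [∀ i, IsProbabilityMeasure (μ i)]
    (f : ι → α → ℝ≥0∞) (hf : ∀ i, Measurable (f i))
    [∀ i, SigmaFinite ((μ i).withDensity (f i))] :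
    Measure.pi (fun i => (μ i).withDensity (f i)) =
      (Measure.pi μ).withDensity (fun x => ∏ i, f i (x i)) := by
  refine Measure.pi_eq fun s hs => ?_
  have hbox := MeasurableSet.univ_pi hs
  have hind : (Set.univ.pi s).indicator (fun x => ∏ i, f i (x i)) =
      fun x => ∏ i, (s i).indicator (f i) (x i) := by
    ext x
    by_cases hx : x ∈ Set.univ.pi s
    · simp_all [Set.indicator_of_mem]
    · obtain ⟨i, hi⟩ : ∃ i, x i ∉ s i := by simpa using hx
      rw [Set.indicator_of_notMem hx, Finset.prod_eq_zero (Finset.mem_univ i)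
        (Set.indicator_of_notMem hi _)]
  rw [withDensity_apply _ hbox, ← lintegral_indicator hbox, hind,
    lintegral_fintype_prod_eq_prod μ _ fun i => (hf i).indicator (hs i)]
  exact Finset.prod_congr rfl fun i _ => by
    rw [lintegral_indicator (hs i), withDensity_apply _ (hs i)]

theorem measurePreserving_comp_perm (Q : Measure α) [SigmaFinite Q] (e : Equiv.Perm ι) :
    MeasurePreserving (fun z : ι → α => z ∘ e) (Measure.pi fun _ => Q) (Measure.pi fun _ => Q) :=
  measurePreserving_arrowCongr' (fun _ => Q) (fun _ => Q) e.symm (MeasurableEquiv.refl α)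
    fun _ => MeasurePreserving.id Q

instance isProbabilityMeasure_update [DecidableEq ι] (μ : ι → Measure α)
    [∀ i, IsProbabilityMeasure (μ i)] (k : ι) (ν : Measure α) [IsProbabilityMeasure ν] (i : ι) :
    IsProbabilityMeasure (Function.update μ k ν i) := by
  rcases eq_or_ne i k with rfl | hi
  · rwa [Function.update_self]
  · rw [Function.update_of_ne hi]; infer_instance

theorem Measure.pi_update_withDensity [DecidableEq ι] (Q : Measure α) [IsProbabilityMeasure Q]
    (k : ι) (W : α → ℝ≥0∞) (hW : Measurable W) [IsProbabilityMeasure (Q.withDensity W)] :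
    Measure.pi (Function.update (fun _ => Q) k (Q.withDensity W)) =
      (Measure.pi fun _ => Q).withDensity (fun z => W (z k)) := by
  have hfam : Function.update (fun _ => Q) k (Q.withDensity W) =
      fun i => Q.withDensity (Function.update (fun _ => (1 : α → ℝ≥0∞)) k W i) := by
    ext1 i
    rcases eq_or_ne i k with rfl | hi
    · simp
    · simp [hi]
  have hdens : (fun z : ι → α => ∏ i, Function.update (fun _ => (1 : α → ℝ≥0∞)) k W i (z i)) =
      fun z => W (z k) := by
    ext1 z
    rw [Finset.prod_eq_single k (fun i _ hi => by simp [hi]) (by simp)]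
    simp
  have : ∀ i, SigmaFinite (Q.withDensity (Function.update (fun _ => (1 : α → ℝ≥0∞)) k W i)) :=
    fun i => by rw [← congrFun hfam i]; infer_instance
  have hf : ∀ i, Measurable (Function.update (fun _ => (1 : α → ℝ≥0∞)) k W i) := by
    intro i
    rcases eq_or_ne i k with rfl | hi
    · simpa
    · simpa [hi] using measurable_one
  rw [← hdens, ← Measure.pi_withDensity _ _ hf]
  congr 1

theorem Measure.exists_measurableSet_le_add (P P' : Measure α) [IsFiniteMeasure P]
    [IsFiniteMeasure P'] :
    ∃ S, MeasurableSet S ∧ P'.real S ≤ P.real S ∧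
      ∀ C, MeasurableSet C → P C ≤ P' C + ENNReal.ofReal (P.real S - P'.real S) := by
  obtain ⟨S, hS, hpos, hneg⟩ := hahn_decomposition P P'
  refine ⟨S, hS, ENNReal.toReal_mono (measure_ne_top _ _) (hpos S hS subset_rfl), fun C hC => ?_⟩
  have hpos' : P'.real (S \ C) ≤ P.real (S \ C) :=
    ENNReal.toReal_mono (measure_ne_top _ _) (hpos _ (hS.diff hC) Set.sdiff_subset)
  have hneg' : P.real (C \ S) ≤ P'.real (C \ S) :=
    ENNReal.toReal_mono (measure_ne_top _ _) (hneg _ (hC.diff hS) fun x hx => hx.2)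
  have hPC := measureReal_inter_add_sdiff (μ := P) (s := C) hS
  have hP'C := measureReal_inter_add_sdiff (μ := P') (s := C) hS
  have hPS := measureReal_inter_add_sdiff (μ := P) (s := S) hC
  have hP'S := measureReal_inter_add_sdiff (μ := P') (s := S) hC
  rw [Set.inter_comm] at hPS hP'S
  calc P C = ENNReal.ofReal (P.real C) := (ofReal_measureReal (measure_ne_top _ _)).symm
    _ ≤ ENNReal.ofReal (P'.real C + (P.real S - P'.real S)) :=
        ENNReal.ofReal_le_ofReal (by linarith)
    _ ≤ P' C + ENNReal.ofReal (P.real S - P'.real S) := by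
        rw [← ofReal_measureReal (μ := P') (measure_ne_top _ C)]
        exact ENNReal.ofReal_add_le

theorem Measure.prod_apply_le_add {β : Type*} [MeasurableSpace β] {P P' : Measure α}
    [SFinite P] [SFinite P'] (ρ : Measure β) [IsProbabilityMeasure ρ] {c : ℝ≥0∞}
    (h : ∀ C, MeasurableSet C → P C ≤ P' C + c) {B : Set (α × β)} (hB : MeasurableSet B) :
    P.prod ρ B ≤ P'.prod ρ B + c := by
  rw [Measure.prod_apply_symm hB, Measure.prod_apply_symm hB]
  calc ∫⁻ y, P ((fun x => (x, y)) ⁻¹' B) ∂ρ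
      ≤ ∫⁻ y, (P' ((fun x => (x, y)) ⁻¹' B) + c) ∂ρ :=
        lintegral_mono fun y => h _ (measurable_prodMk_right hB)
    _ = ∫⁻ y, P' ((fun x => (x, y)) ⁻¹' B) ∂ρ + c := by
        rw [lintegral_add_right _ measurable_const, lintegral_const, measure_univ, mul_one]

theorem Measure.pi_update_le_add {n : ℕ} (Q : Measure α) [IsProbabilityMeasure Q]
    (k : Fin (n + 1)) {P P' : Measure α} [IsProbabilityMeasure P] [IsProbabilityMeasure P']
    {c : ℝ≥0∞} (h : ∀ C, MeasurableSet C → P C ≤ P' C + c) {B : Set (Fin (n + 1) → α)}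
    (hB : MeasurableSet B) :
    Measure.pi (Function.update (fun _ => Q) k P) B ≤
      Measure.pi (Function.update (fun _ => Q) k P') B + c := by
  have hsplit : ∀ (R : Measure α) [IsProbabilityMeasure R],
      Measure.pi (Function.update (fun _ => Q) k R) B =
        R.prod (Measure.pi fun _ : Fin n => Q)
          ((MeasurableEquiv.piFinSuccAbove (fun _ => α) k).symm ⁻¹' B) := by
    intro R _
    have hmp := measurePreserving_piFinSuccAbove (Function.update (fun _ => Q) k R) k
    simp only [Function.update_self, ne_eq, Fin.succAbove_ne, not_false_eq_true,
      Function.update_of_ne] at hmp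
    exact (hmp.symm.measure_preimage_equiv B).symm
  rw [hsplit P, hsplit P']
  exact Measure.prod_apply_le_add _ h ((MeasurableEquiv.piFinSuccAbove _ k).symm.measurable hB)

end MeasureTheory

section ExceedsQuantile

variable {ι Z : Type*} [Fintype ι]

def ExceedsQuantile (w v : ι → ℝ) (α : ℝ) (k : ι) : Prop :=
  (1 - α) * ∑ j, w j ≤ ∑ j ∈ Finset.univ.filter (fun j => v j < v k), w j

theorem exceedsQuantile_comp_perm (w v : ι → ℝ) (α : ℝ) (e : Equiv.Perm ι) (k : ι) :
    ExceedsQuantile (w ∘ e) (v ∘ e) α k ↔ ExceedsQuantile w v α (e k) := by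
  simp only [ExceedsQuantile, Function.comp_apply]
  rw [Equiv.sum_comp e w, Finset.sum_equiv e (g := w)
    (t := Finset.univ.filter fun j => v j < v (e k)) (by simp) (fun _ _ => rfl)]

theorem exceedsQuantile_of_not_le_wQuantile {w : ι → ℝ} (hw : ∀ i, 0 ≤ w i) {α : ℝ} (hα : α < 1)
    {v : ι → ℝ} {u : ι → EReal} (hvu : ∀ i, (v i : EReal) ≤ u i) {k : ι}
    (h : ¬ (v k : EReal) ≤ wQuantile (1 - α) (fun i => w i / ∑ j, w j) u) :
    ExceedsQuantile w v α k := by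
  obtain ⟨_, ⟨r, rfl, hr⟩, hrk⟩ := sInf_lt_iff.mp (not_le.mp h)
  have hsum : 0 < ∑ j, w j := by
    refine (Finset.sum_nonneg fun j _ => hw j).lt_of_ne fun h0 => ?_
    simp only [← h0, div_zero, Finset.sum_const_zero] at hr
    linarith
  rw [← Finset.sum_div, le_div_iff₀ hsum] at hr
  refine hr.trans (Finset.sum_le_sum_of_subset_of_nonneg (fun i hi => ?_) fun i _ _ => hw i)
  simp only [Finset.mem_filter, Finset.mem_univ, true_and] at hi ⊢
  exact EReal.coe_lt_coe_iff.mp ((hvu i).trans hi |>.trans_lt hrk)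

theorem sum_indicator_exceedsQuantile_le {w : ι → ℝ} (hw : ∀ i, 0 ≤ w i) {α : ℝ} (hα : 0 ≤ α)
    (v : ι → ℝ) :
    ∑ k, {k | ExceedsQuantile w v α k}.indicator w k ≤ α * ∑ j, w j := by
  classical
  simp only [Set.indicator_apply, Set.mem_ofPred_eq, ← Finset.sum_filter]
  set K := Finset.univ.filter (ExceedsQuantile w v α)
  rcases K.eq_empty_or_nonempty with hK | hK
  · rw [hK, Finset.sum_empty]
    exact mul_nonneg hα (Finset.sum_nonneg fun j _ => hw j)
  -- every exceeding index scores at least `v k₀`, hence lies outside `{j | v j < v k₀}`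
  obtain ⟨k₀, hk₀, hmin⟩ := K.exists_min_image v hK
  have hsub : K ⊆ Finset.univ.filter (fun j => ¬ v j < v k₀) := fun k hk => by
    simpa using hmin k hk
  have hsplit := Finset.sum_filter_add_sum_filter_not Finset.univ (fun j => v j < v k₀) w
  have hk₀' : ExceedsQuantile w v α k₀ := (Finset.mem_filter.mp hk₀).2
  have := Finset.sum_le_sum_of_subset_of_nonneg hsub fun i _ _ => hw i
  unfold ExceedsQuantile at hk₀'
  linarith

def exceedanceSet (w V : Z → ℝ) (α : ℝ) (k : ι) : Set (ι → Z) :=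
  {z | ExceedsQuantile (fun i => w (z i)) (fun i => V (z i)) α k}

theorem comp_swap_mem_exceedanceSet_iff [DecidableEq ι] (w V : Z → ℝ) (α : ℝ) (z : ι → Z)
    (l k : ι) : z ∘ Equiv.swap l k ∈ exceedanceSet w V α l ↔ z ∈ exceedanceSet w V α k :=
  (exceedsQuantile_comp_perm (fun i => w (z i)) (fun i => V (z i)) α _ l).trans
    (by rw [Equiv.swap_apply_left]; rfl)

theorem sum_indicator_exceedanceSet_le {w : Z → ℝ} (hw0 : ∀ z, 0 ≤ w z) (V : Z → ℝ) {α : ℝ}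
    (hα : 0 ≤ α) (z : ι → Z) :
    ∑ l, (exceedanceSet w V α l).indicator (fun z => ENNReal.ofReal (w (z l))) z ≤
      ENNReal.ofReal α * ∑ j, ENNReal.ofReal (w (z j)) := by
  have hind : ∀ l, (exceedanceSet w V α l).indicator (fun z => ENNReal.ofReal (w (z l))) z =
      ENNReal.ofReal ({l | ExceedsQuantile (fun i => w (z i)) (fun i => V (z i)) α l}.indicator
        (fun i => w (z i)) l) := by
    intro l
    by_cases hl : ExceedsQuantile (fun i => w (z i)) (fun i => V (z i)) α l <;>
      simp [exceedanceSet, hl]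
  rw [Finset.sum_congr rfl fun l _ => hind l, ← ENNReal.ofReal_sum_of_nonneg
    fun l _ => Set.indicator_nonneg (fun i _ => hw0 _) l,
    ← ENNReal.ofReal_sum_of_nonneg fun j _ => hw0 _, ← ENNReal.ofReal_mul hα]
  exact ENNReal.ofReal_le_ofReal (sum_indicator_exceedsQuantile_le (fun i => hw0 _) hα _)

end ExceedsQuantile

section WeightedExchangeability

open MeasureTheory

variable {ι Z : Type*} [Fintype ι] [MeasurableSpace Z]

theorem measurableSet_exceedanceSet {w V : Z → ℝ} (hw : Measurable w) (hV : Measurable V)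
    (α : ℝ) (k : ι) : MeasurableSet (exceedanceSet w V α k) := by
  simp only [exceedanceSet, ExceedsQuantile, Finset.sum_filter]
  refine measurableSet_le (by fun_prop) (Finset.measurable_sum _ fun j _ => ?_)
  exact Measurable.ite (measurableSet_lt (by fun_prop) (by fun_prop)) (by fun_prop)
    measurable_const

theorem lintegral_indicator_exceedanceSet_eq [DecidableEq ι] (Q : Measure Z) [SigmaFinite Q]
    {w V : Z → ℝ} (hw : Measurable w) (hV : Measurable V) {W : Z → ℝ≥0∞} (hW : Measurable W)
    (α : ℝ) (l k : ι) :
    ∫⁻ z, (exceedanceSet w V α l).indicator (fun z => W (z l)) z ∂(Measure.pi fun _ => Q) =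
      ∫⁻ z, (exceedanceSet w V α k).indicator (fun z => W (z k)) z ∂(Measure.pi fun _ => Q) := by
  have hmeas : Measurable ((exceedanceSet w V α l).indicator fun z : ι → Z => W (z l)) :=
    (hW.comp (measurable_pi_apply l)).indicator (measurableSet_exceedanceSet hw hV α l)
  rw [← (measurePreserving_comp_perm Q (Equiv.swap l k)).lintegral_comp hmeas]
  refine lintegral_congr fun z => ?_
  have hmem := comp_swap_mem_exceedanceSet_iff w V α z l k
  by_cases hz : z ∈ exceedanceSet w V α k
  · simp [Set.indicator_of_mem (hmem.2 hz), Set.indicator_of_mem hz]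
  · simp [Set.indicator_of_notMem (mt hmem.1 hz), Set.indicator_of_notMem hz]

theorem pi_update_withDensity_exceedanceSet_le [DecidableEq ι] (Q : Measure Z)
    [IsProbabilityMeasure Q] {w : Z → ℝ} (hw : Measurable w) (hw0 : ∀ z, 0 ≤ w z)
    [IsProbabilityMeasure (Q.withDensity fun z => ENNReal.ofReal (w z))]
    {V : Z → ℝ} (hV : Measurable V) {α : ℝ} (hα : 0 ≤ α) (k : ι) :
    Measure.pi (Function.update (fun _ => Q) k (Q.withDensity fun z => ENNReal.ofReal (w z)))
      (exceedanceSet w V α k) ≤ ENNReal.ofReal α := by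
  set W : Z → ℝ≥0∞ := fun z => ENNReal.ofReal (w z)
  have hW : Measurable W := hw.ennreal_ofReal
  set π := Measure.pi fun _ : ι => Q
  set h : ι → (ι → Z) → ℝ≥0∞ := fun l => (exceedanceSet w V α l).indicator fun z => W (z l)
  have hmeas : ∀ l, Measurable (h l) := fun l =>
    (hW.comp (measurable_pi_apply l)).indicator (measurableSet_exceedanceSet hw hV α l)
  have htotal : ∫⁻ z, ∑ j, W (z j) ∂π = Fintype.card ι := by
    have hcoord : ∀ j, ∫⁻ z, W (z j) ∂π = 1 := fun j =>
      ((measurePreserving_eval (fun _ : ι => Q) j).lintegral_comp hW).trans <| by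
        rw [← setLIntegral_univ, ← withDensity_apply _ MeasurableSet.univ, measure_univ]
    rw [lintegral_finsetSum (f := fun j (z : ι → Z) => W (z j)) _
      fun j _ => hW.comp (measurable_pi_apply j)]
    simp [hcoord]
  have hcard : (Fintype.card ι : ℝ≥0∞) * ∫⁻ z, h k z ∂π ≤
      Fintype.card ι * ENNReal.ofReal α := by
    calc (Fintype.card ι : ℝ≥0∞) * ∫⁻ z, h k z ∂π = ∑ l, ∫⁻ z, h l z ∂π := by
          simp [h, π, lintegral_indicator_exceedanceSet_eq Q hw hV hW α _ k]
      _ = ∫⁻ z, ∑ l, h l z ∂π := (lintegral_finsetSum _ fun l _ => hmeas l).symm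
      _ ≤ ∫⁻ z, ENNReal.ofReal α * ∑ j, W (z j) ∂π :=
          lintegral_mono fun z => sum_indicator_exceedanceSet_le hw0 V hα z
      _ = Fintype.card ι * ENNReal.ofReal α := by
        rw [lintegral_const_mul (f := fun z : ι → Z => ∑ j, W (z j)) _
          (Finset.measurable_sum _ fun j _ => hW.comp (measurable_pi_apply j)), htotal,
          mul_comm]
  have : Nonempty ι := ⟨k⟩
  rw [Measure.pi_update_withDensity Q k W hW, withDensity_apply _
    (measurableSet_exceedanceSet hw hV α k), ← lintegral_indicator
    (measurableSet_exceedanceSet hw hV α k)]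
  exact (ENNReal.mul_le_mul_iff_right (by simp) (by simp)).mp hcard

end WeightedExchangeability

section BayesRisk

open MeasureTheory

variable {Z : Type*} [MeasurableSpace Z]

-- `balancedRisk` and `bayesRisk` are reducible so that `linarith` matches `bayesRisk P P̃` with
-- the infimum spelled out in the final theorem.
noncomputable abbrev balancedRisk (P P' : Measure Z) (g : Z → Bool) : ℝ≥0∞ :=
  ((1 / 2 : ℝ≥0∞) • P.prod (Measure.dirac true) + (1 / 2 : ℝ≥0∞) • P'.prod (Measure.dirac false))
    {p : Z × Bool | g p.1 ≠ p.2}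

noncomputable abbrev bayesRisk (P P' : Measure Z) : ℝ :=
  ⨅ g : {g : Z → Bool // Measurable g}, (balancedRisk P P' g).toReal

theorem balancedRisk_eq (P P' : Measure Z) [SFinite P] [SFinite P'] (g : Z → Bool) :
    balancedRisk P P' g = (1 / 2 : ℝ≥0∞) * (P {z | g z ≠ true} + P' {z | g z ≠ false}) := by
  simp only [balancedRisk, Measure.add_apply, Measure.smul_apply, smul_eq_mul,
    Measure.prod_dirac, (measurableEmbedding_prod_mk_right _).map_apply, mul_add]
  rfl

theorem sub_le_one_sub_two_mul_bayesRisk (P P' : Measure Z) [IsProbabilityMeasure P]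
    [IsFiniteMeasure P'] {S : Set Z} (hS : MeasurableSet S) :
    P.real S - P'.real S ≤ 1 - 2 * bayesRisk P P' := by
  classical
  set g : Z → Bool := fun z => decide (z ∈ S)
  have hg : Measurable g := measurable_to_bool (by convert hS using 1; ext z; simp [g])
  refine le_trans ?_ (sub_le_sub_left (mul_le_mul_of_nonneg_left
    (ciInf_le ⟨0, ?_⟩ ⟨g, hg⟩) zero_le_two) 1)
  · have h₁ : {z | g z ≠ true} = Sᶜ := by ext; simp [g]
    have h₂ : {z | g z ≠ false} = S := by ext; simp [g]
    rw [balancedRisk_eq, h₁, h₂, ENNReal.toReal_mul,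
      ENNReal.toReal_add (measure_ne_top _ _) (measure_ne_top _ _), ← measureReal_def,
      ← measureReal_def, probReal_compl_eq_one_sub hS]
    norm_num
    linarith
  · rintro _ ⟨_, rfl⟩
    exact ENNReal.toReal_nonneg

end BayesRisk

theorem MeasureTheory.one_sub_le_measureReal_of_compl_le {Ω : Type*} [MeasurableSpace Ω]
    {μ : Measure Ω} [IsProbabilityMeasure μ] {s : Set Ω} {c : ℝ} (hc : 0 ≤ c)
    (h : μ sᶜ ≤ ENNReal.ofReal c) : 1 - c ≤ μ.real s := by
  have hle := measureReal_union_le (μ := μ) s sᶜ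
  have hc' : μ.real sᶜ ≤ c := ENNReal.toReal_le_of_le_ofReal hc h
  rw [Set.union_compl_self, probReal_univ] at hle
  linarith

theorem MeasureTheory.isProbabilityMeasure_withDensity_ofReal {Z : Type*} [MeasurableSpace Z]
    {Q : Measure Z} {w : Z → ℝ} (hw0 : ∀ z, 0 ≤ w z) (hwint : ∫ z, w z ∂Q = 1) :
    IsProbabilityMeasure (Q.withDensity fun z => ENNReal.ofReal (w z)) := ⟨by
  rw [withDensity_apply _ MeasurableSet.univ, Measure.restrict_univ,
    ← ofReal_integral_eq_lintegral_ofReal (.of_integral_ne_zero (by simp [hwint]))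
      (ae_of_all _ hw0), hwint, ENNReal.ofReal_one]⟩

theorem ProbabilityTheory.iIndepFun.map_eq_pi_update_last {Ω Z : Type*} [MeasurableSpace Ω]
    [MeasurableSpace Z] {μ : Measure Ω} [IsProbabilityMeasure μ] {n : ℕ}
    {Zi : Fin (n + 1) → Ω → Z} (hZmeas : ∀ i, Measurable (Zi i)) (hindep : iIndepFun Zi μ)
    {Q P : Measure Z} [IsProbabilityMeasure Q] [IsProbabilityMeasure P]
    (hlawQ : ∀ i : Fin n, μ.map (Zi i.castSucc) = Q) (hlawP : μ.map (Zi (Fin.last n)) = P) :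
    μ.map (fun x i => Zi i x) = Measure.pi (Function.update (fun _ => Q) (Fin.last n) P) := by
  rw [(iIndepFun_iff_map_fun_eq_pi_map fun i => (hZmeas i).aemeasurable).1 hindep]
  congr 1
  ext1 i
  induction i using Fin.lastCases with
  | last => simp [hlawP]
  | cast j => simp [hlawQ j, Fin.castSucc_ne_last]

theorem weighted_conformal_coverage_bayes_risk_bound_general
    {Z : Type*} [MeasurableSpace Z] (Q P : Measure Z)
    [IsProbabilityMeasure Q] [IsProbabilityMeasure P]
    (w : Z → ℝ) (hwmeas : Measurable w) (hw0 : ∀ z, 0 ≤ w z)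
    (hwint : ∫ z, w z ∂Q = 1)
    {Ω : Type*} [MeasurableSpace Ω] (μ : Measure Ω) [IsProbabilityMeasure μ]
    (n : ℕ) (Zi : Fin (n + 1) → Ω → Z) (hZmeas : ∀ i, Measurable (Zi i))
    (hindep : iIndepFun Zi μ)
    (hlawQ : ∀ i : Fin n, Measure.map (Zi i.castSucc) μ = Q)
    (hlawP : Measure.map (Zi (Fin.last n)) μ = P)
    (V : Z → ℝ) (hV : Measurable V) (α : ℝ) (hα : α ∈ Set.Ioo (0 : ℝ) 1) :
    1 - α - (1 - 2 *
      (⨅ g : {g : Z → Bool // Measurable g},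
        ((((1 : ℝ≥0∞) / 2) • (P.prod (Measure.dirac true)) +
          ((1 : ℝ≥0∞) / 2) •
            ((Q.withDensity (fun z => ENNReal.ofReal (w z))).prod (Measure.dirac false)))
          {p : Z × Bool | g.1 p.1 ≠ p.2}).toReal)) ≤
      (μ {x | ((V (Zi (Fin.last n) x) : ℝ) : EReal) ≤
        wQuantile (1 - α)
          (fun i : Fin (n + 1) => w (Zi i x) / ∑ j : Fin (n + 1), w (Zi j x))
          (fun i : Fin (n + 1) =>
            if (i : ℕ) < n then ((V (Zi i x) : ℝ) : EReal) else (⊤ : EReal))}).toReal := by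
  set Pt := Q.withDensity fun z => ENNReal.ofReal (w z)
  have : IsProbabilityMeasure Pt := isProbabilityMeasure_withDensity_ofReal hw0 hwint
  obtain ⟨S, hS, hPtS, hPS⟩ := Measure.exists_measurableSet_le_add P Pt
  have hD : 0 ≤ P.real S - Pt.real S := sub_nonneg.mpr hPtS
  have hE := measurableSet_exceedanceSet (ι := Fin (n + 1)) hwmeas hV α (Fin.last n)
  refine le_trans ?_ (one_sub_le_measureReal_of_compl_le (add_nonneg hα.1.le hD) ?_)
  · linarith [sub_le_one_sub_two_mul_bayesRisk P Pt hS]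
  calc μ _ ≤ μ ((fun x i => Zi i x) ⁻¹'
        exceedanceSet w V α (Fin.last n)) :=
        measure_mono fun x hx => exceedsQuantile_of_not_le_wQuantile (fun i => hw0 _) hα.2
          (fun i => by split_ifs <;> simp) hx
    _ = Measure.pi (Function.update (fun _ => Q) (Fin.last n) P) _ := by
        rw [← Measure.map_apply (measurable_pi_lambda _ hZmeas) hE,
          hindep.map_eq_pi_update_last hZmeas hlawQ hlawP]
    _ ≤ Measure.pi (Function.update (fun _ => Q) (Fin.last n) Pt) _ +
          ENNReal.ofReal (P.real S - Pt.real S) := Measure.pi_update_le_add Q _ hPS hE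
    _ ≤ ENNReal.ofReal α + ENNReal.ofReal (P.real S - Pt.real S) := by
        gcongr
        exact pi_update_withDensity_exceedanceSet_le Q hwmeas hw0 hV hα.1.le _
    _ = ENNReal.ofReal (α + (P.real S - Pt.real S)) := (ENNReal.ofReal_add hα.1.le hD).symm

/-- Weighted conformal prediction with normalized weight function `ω̃`
(`∫ ω̃ dQ = 1`, `P̃ := ω̃ · Q`): letting `R*` denote the Bayes risk of the balanced
classification problem between `P` (label `1 = true`) and `P̃` (label `0 = false`), the
coverage of the weighted split quantile is at least `1 - α - (1 - 2 R*)`. -/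
theorem weighted_conformal_coverage_bayes_risk_bound
    {Z : Type*} [MeasurableSpace Z] (Q P : Measure Z)
    [IsProbabilityMeasure Q] [IsProbabilityMeasure P]
    (w : Z → ℝ) (hwmeas : Measurable w) (hw0 : ∀ z, 0 ≤ w z)
    (hwint : ∫ z, w z ∂Q = 1)
    {Ω : Type*} [MeasurableSpace Ω] (μ : Measure Ω) [IsProbabilityMeasure μ]
    (n : ℕ) (hn : 1 ≤ n) (Zi : Fin (n + 1) → Ω → Z) (hZmeas : ∀ i, Measurable (Zi i))
    (hindep : iIndepFun Zi μ)
    (hlawQ : ∀ i : Fin n, Measure.map (Zi i.castSucc) μ = Q)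
    (hlawP : Measure.map (Zi (Fin.last n)) μ = P)
    (V : Z → ℝ) (hV : Measurable V) (α : ℝ) (hα : α ∈ Set.Ioo (0 : ℝ) 1) :
    1 - α - (1 - 2 *
      (⨅ g : {g : Z → Bool // Measurable g},
        ((((1 : ℝ≥0∞) / 2) • (P.prod (Measure.dirac true)) +
          ((1 : ℝ≥0∞) / 2) •
            ((Q.withDensity (fun z => ENNReal.ofReal (w z))).prod (Measure.dirac false)))
          {p : Z × Bool | g.1 p.1 ≠ p.2}).toReal)) ≤
      (μ {x | ((V (Zi (Fin.last n) x) : ℝ) : EReal) ≤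
        wQuantile (1 - α)
          (fun i : Fin (n + 1) => w (Zi i x) / ∑ j : Fin (n + 1), w (Zi j x))
          (fun i : Fin (n + 1) =>
            if (i : ℕ) < n then ((V (Zi i x) : ℝ) : EReal) else (⊤ : EReal))}).toReal :=
  weighted_conformal_coverage_bayes_risk_bound_general Q P w hwmeas hw0 hwint μ n Zi hZmeas hindep
    hlawQ hlawP V hV α hα
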